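/- Let g: ℝ^d → ℝ be convex, f: ℝ^d → ℝ differentiable, and define D_g(x, λ) = −2λ min_y [⟨∇f(x), y−x⟩ + (λ/2)‖y−x‖² + g(y) − g(x)]. Then for 0 < λ₁ ≤ λ₂ we have D_g(x, λ₂) ≥ D_g(x, λ₁). -/

import Mathlib

open RealInnerProductSpace

/-- The quantity `D_g(x, λ)` from the proximal-PL inequality. -/
noncomputable def Dg {d : ℕ} (f g : EuclideanSpace ℝ (Fin d) → ℝ)
    (x : EuclideanSpace ℝ (Fin d)) (lam : ℝ) : ℝ :=
  -2 * lam * ⨅ y : EuclideanSpace ℝ (Fin d),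
    (⟪gradient f x, y - x⟫ + lam / 2 * ‖y - x‖ ^ 2 + g y - g x)

/-!
Write `φ_λ(y) = ⟪v, y - x⟫ + λ/2 ‖y - x‖² + g y - g x`, so that `D_g(x, λ) = -2λ inf φ_λ`
with `v = ∇f(x)`. For `t ∈ [0, 1]`, convexity of `g` gives `φ_λ(x + t(y - x)) ≤ t φ_{tλ}(y)`.
Taking `λ = λ₂`, `t = λ₁/λ₂` and `y` a minimiser of `φ_{λ₁}` yields
`λ₂ inf φ_{λ₂} ≤ λ₁ inf φ_{λ₁}`, which is the claim.
-/

section ProxModel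

variable {E : Type*} [NormedAddCommGroup E] [InnerProductSpace ℝ E]

noncomputable def proxModel (v : E) (g : E → ℝ) (x : E) (lam : ℝ) (y : E) : ℝ :=
  ⟪v, y - x⟫ + lam / 2 * ‖y - x‖ ^ 2 + g y - g x

theorem proxModel_segment_le {g : E → ℝ} (hg : ConvexOn ℝ Set.univ g) (v x y : E)
    (lam : ℝ) {t : ℝ} (ht₀ : 0 ≤ t) (ht₁ : t ≤ 1) :
    proxModel v g x lam (x + t • (y - x)) ≤ t * proxModel v g x (t * lam) y := by
  have hg_seg : g (x + t • (y - x)) ≤ t * g y + (1 - t) * g x := by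
    have hpt : x + t • (y - x) = t • y + (1 - t) • x := by
      rw [smul_sub]; module
    rw [hpt]
    exact hg.2 (Set.mem_univ y) (Set.mem_univ x) ht₀ (by linarith) (by ring)
  have hinner : ⟪v, x + t • (y - x) - x⟫ = t * ⟪v, y - x⟫ := by
    rw [add_sub_cancel_left, real_inner_smul_right]
  have hnorm : ‖x + t • (y - x) - x‖ ^ 2 = t ^ 2 * ‖y - x‖ ^ 2 := by
    rw [add_sub_cancel_left, norm_smul, Real.norm_of_nonneg ht₀, mul_pow]
  unfold proxModel
  rw [hinner, hnorm]
  nlinarith [hg_seg]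

theorem mul_iInf_proxModel_le {g : E → ℝ} (hg : ConvexOn ℝ Set.univ g) (v x : E)
    {lam₁ lam₂ : ℝ} (h₁ : 0 < lam₁) (h₁₂ : lam₁ ≤ lam₂) {y₁ : E}
    (hy₁ : IsMinOn (proxModel v g x lam₁) Set.univ y₁)
    (hbdd₂ : BddBelow (Set.range (proxModel v g x lam₂))) :
    lam₂ * ⨅ y, proxModel v g x lam₂ y ≤ lam₁ * ⨅ y, proxModel v g x lam₁ y := by
  have h₂ : 0 < lam₂ := h₁.trans_le h₁₂
  set t := lam₁ / lam₂
  have ht_lam : t * lam₂ = lam₁ := div_mul_cancel₀ lam₁ h₂.ne'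
  have hinf₁ : ⨅ y, proxModel v g x lam₁ y = proxModel v g x lam₁ y₁ :=
    le_antisymm (ciInf_le (Set.image_univ ▸ hy₁.bddBelow) y₁)
      (le_ciInf (isMinOn_univ_iff.mp hy₁))
  calc lam₂ * ⨅ y, proxModel v g x lam₂ y
      ≤ lam₂ * proxModel v g x lam₂ (x + t • (y₁ - x)) := by
        gcongr
        exact ciInf_le hbdd₂ _
    _ ≤ lam₂ * (t * proxModel v g x (t * lam₂) y₁) := by
        gcongr
        exact proxModel_segment_le hg v x y₁ lam₂ (div_nonneg h₁.le h₂.le)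
          (div_le_one_of_le₀ h₁₂ h₂.le)
    _ = lam₁ * ⨅ y, proxModel v g x lam₁ y := by
        rw [hinf₁, ht_lam, ← mul_assoc, mul_comm lam₂ t, ht_lam]

end ProxModel

theorem Dg_monotone_general
    {d : ℕ} (f g : EuclideanSpace ℝ (Fin d) → ℝ)
    (hconv : ConvexOn ℝ Set.univ g)
    (hattain : ∀ (x : EuclideanSpace ℝ (Fin d)) (lam : ℝ), 0 < lam →
      ∃ y, IsMinOn (fun y => ⟪gradient f x, y - x⟫ + lam / 2 * ‖y - x‖ ^ 2 + g y - g x)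
        Set.univ y)
    (lam₁ lam₂ : ℝ) (h₁ : 0 < lam₁) (h₁₂ : lam₁ ≤ lam₂) :
    ∀ x, Dg f g x lam₁ ≤ Dg f g x lam₂ := by
  intro x
  obtain ⟨y₁, hy₁⟩ := hattain x lam₁ h₁
  obtain ⟨y₂, hy₂⟩ := hattain x lam₂ (h₁.trans_le h₁₂)
  have hbdd₂ : BddBelow (Set.range (proxModel (gradient f x) g x lam₂)) :=
    Set.image_univ ▸ hy₂.bddBelow
  have key := mul_iInf_proxModel_le hconv (gradient f x) x h₁ h₁₂ hy₁ hbdd₂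
  change -2 * lam₁ * ⨅ y, proxModel (gradient f x) g x lam₁ y
    ≤ -2 * lam₂ * ⨅ y, proxModel (gradient f x) g x lam₂ y
  linarith

theorem Dg_monotone
    {d : ℕ} (f g : EuclideanSpace ℝ (Fin d) → ℝ)
    (hdiff : Differentiable ℝ f) (hconv : ConvexOn ℝ Set.univ g)
    (hattain : ∀ (x : EuclideanSpace ℝ (Fin d)) (lam : ℝ), 0 < lam →
      ∃ y, IsMinOn (fun y => ⟪gradient f x, y - x⟫ + lam / 2 * ‖y - x‖ ^ 2 + g y - g x)
        Set.univ y)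
    (lam₁ lam₂ : ℝ) (h₁ : 0 < lam₁) (h₁₂ : lam₁ ≤ lam₂) :
    ∀ x, Dg f g x lam₁ ≤ Dg f g x lam₂ :=
  Dg_monotone_general f g hconv hattain lam₁ lam₂ h₁ h₁₂
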